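/- Update delta for safe generators: Let m be a pattern query, R a node with ⟦m(R)⟧ = (⊤, Γ₀) for some scope Γ₀, and g a generator that is safe for (m, R) with attribute scope Γ and node scope μ. Assume every node occurs at most once in R and every node occurs at most once in ⟦g⟧_{Γ,μ}. Then, as an identity of generalized multisets, D(⟦g⟧_{Γ,μ}) ⊖ D(R) = {| N' ↦ 1 : (g', N') ∈ GP(g, Γ, μ) |} ⊖ {| N' ↦ 1 : (q', N') ∈ MP(m, R) |}. -/

import Mathlib

open Classical
noncomputable section

/-! ### Abstract syntax trees -/

/-- An AST node: a label, an attribute map, and a list of children.  The type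
`Attr` stands for the finite partial attribute maps `Σ_M ⇀ 𝔻`. -/
inductive ASTNode (L : Type) (Attr : Type) : Type where
  | mk : L → Attr → List (ASTNode L Attr) → ASTNode L Attr

namespace ASTNode

variable {L Attr : Type}

def label : ASTNode L Attr → L
  | .mk ℓ _ _ => ℓ

def attrs : ASTNode L Attr → Attr
  | .mk _ A _ => A

def children : ASTNode L Attr → List (ASTNode L Attr)
  | .mk _ _ ns => ns

end ASTNode

/-! ### Scopes -/

/-- A scope: a partial map from node variables to attribute maps. -/
def Scope (I : Type) (Attr : Type) := I → Option Attr

def emptyScope {I Attr : Type} : Scope I Attr := fun _ => none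

/-- Left-biased union of scopes. -/
def Scope.union {I Attr : Type} (Γ₁ Γ₂ : Scope I Attr) : Scope I Attr :=
  fun i => (Γ₁ i).orElse (fun _ => Γ₂ i)

/-- `{i ↦ A} ∪ Γ`. -/
def Scope.insert {I Attr : Type} (i : I) (A : Attr) (Γ : Scope I Attr) : Scope I Attr :=
  fun j => if j = i then some A else Γ j

/-! ### Pattern queries -/

/-- Pattern queries: `AnyNode`, or `Match(ℓ, i, [q₁,…,qₙ], θ)` with `θ` a Boolean
predicate on scopes. -/
inductive Pattern (L : Type) (Attr : Type) (I : Type) : Type where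
  | any : Pattern L Attr I
  | node : L → I → List (Pattern L Attr I) → (Scope I Attr → Bool) → Pattern L Attr I

variable {L Attr I : Type}

mutual
/-- Pattern evaluation `⟦q(N)⟧`, returning a Boolean and a scope. -/
def evalPattern : Pattern L Attr I → ASTNode L Attr → Bool × Scope I Attr
  | .any, _ => (true, emptyScope)
  | .node ℓq i qs θ, .mk ℓ A ns =>
      match evalChildren qs ns with
      | none => (false, emptyScope)
      | some Γc =>
          let Γ : Scope I Attr := Scope.insert i A Γc
          if ℓq = ℓ ∧ θ Γ = true then (true, Γ) else (false, emptyScope)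

/-- Evaluate the children: succeeds (returning the union of the child scopes)
iff the lists have equal length and every child pattern matches. -/
def evalChildren : List (Pattern L Attr I) → List (ASTNode L Attr) → Option (Scope I Attr)
  | [], [] => some emptyScope
  | q :: qs, n :: ns =>
      match evalPattern q n, evalChildren qs ns with
      | (true, Γ₁), some Γ₂ => some (Γ₁.union Γ₂)
      | _, _ => none
  | _, _ => none
end

mutual
/-- The descendants `D(N)` of a node (as a list). -/
def ASTNode.descendants : ASTNode L Attr → List (ASTNode L Attr)
  | .mk ℓ A ns => .mk ℓ A ns :: descendantsList ns

def descendantsList : List (ASTNode L Attr) → List (ASTNode L Attr)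
  | [] => []
  | n :: ns => n.descendants ++ descendantsList ns
end

/-- The match set `q(N)`: descendants of `N` on which `q` evaluates to true. -/
def matchSet (q : Pattern L Attr I) (N : ASTNode L Attr) : Set (ASTNode L Attr) :=
  {N' | N' ∈ N.descendants ∧ ∃ Γ, evalPattern q N' = (true, Γ)}

/-! ### Generalized multisets -/

/-- Lift a list (in particular, a set given as a duplicate-free list) to the
generalized multiset counting occurrences. -/
def listGM (l : List (ASTNode L Attr)) : ASTNode L Attr →₀ ℤ :=
  (l.map (fun x => Finsupp.single x (1 : ℤ))).sum

/-- A view `V_q` is correct for `N` if it maps elements of `q(N)` to `1` and all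
other nodes to `0`. -/
def CorrectView (q : Pattern L Attr I) (N : ASTNode L Attr) (V : ASTNode L Attr →₀ ℤ) : Prop :=
  ∀ x, V x = if x ∈ matchSet q N then 1 else 0

/-- `IVM(q, V, Δ)`: add `Δ(x)` to `V(x)` at every `x` on which `q` evaluates to true. -/
def IVM (q : Pattern L Attr I) (V Δ : ASTNode L Attr →₀ ℤ) : ASTNode L Attr →₀ ℤ :=
  V + Δ.filter (fun x => (evalPattern q x).1 = true)

/-! ### Replacement, depth, ancestors -/

mutual
/-- The replacement `N[R\R']`. -/
def ASTNode.repl (R R' : ASTNode L Attr) : ASTNode L Attr → ASTNode L Attr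
  | .mk ℓ A ns =>
      if ASTNode.mk ℓ A ns = R then R' else .mk ℓ A (replList R R' ns)

def replList (R R' : ASTNode L Attr) : List (ASTNode L Attr) → List (ASTNode L Attr)
  | [] => []
  | n :: ns => ASTNode.repl R R' n :: replList R R' ns
end

mutual
/-- The depth `dep(q)` of a pattern. -/
def Pattern.depth : Pattern L Attr I → ℕ
  | .any => 0
  | .node _ _ qs _ => 1 + depthList qs

def depthList : List (Pattern L Attr I) → ℕ
  | [] => 0
  | q :: qs => max q.depth (depthList qs)
end

/-- `descAt d N M`: `M` is a descendant of `N` at distance exactly `d`. -/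
def descAt : ℕ → ASTNode L Attr → ASTNode L Attr → Prop
  | 0, N, M => N = M
  | d + 1, N, M => ∃ c ∈ N.children, descAt d c M

/-- The generalized multiset `{| Aⁱ(R) ↦ 1 : 1 ≤ i ≤ d, Aⁱ(R) exists relative to N |}`
of ancestors of `R` (in `N`) at distances `1,…,d`. -/
def ancestorsGM (N R : ASTNode L Attr) (d : ℕ) : ASTNode L Attr →₀ ℤ :=
  ∑ i ∈ Finset.Icc 1 d, listGM (N.descendants.filter (fun A => decide (descAt i A R)))

/-- The maximal search set `⌈R, R'⌉_q` (ancestors of `R` are taken in `N`,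
ancestors of `R'` in `N[R\R']`). -/
def maxSearchSet (q : Pattern L Attr I) (N R R' : ASTNode L Attr) : ASTNode L Attr →₀ ℤ :=
  listGM R.descendants + ancestorsGM N R q.depth
    - listGM R'.descendants - ancestorsGM (N.repl R R') R' q.depth

/-! ### Node generators -/

/-- Node generators: `Reuse(i)` or `Gen(ℓ, ā, [g₁,…,gₙ])`, where the attribute
expressions `ā` are collectively a function from scopes to attribute maps. -/
inductive NodeGen (L : Type) (Attr : Type) (I : Type) : Type where
  | reuse : I → NodeGen L Attr I
  | gen : L → (Scope I Attr → Attr) → List (NodeGen L Attr I) → NodeGen L Attr I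

mutual
/-- Generator evaluation `⟦g⟧_{Γ,μ}`. -/
def evalGen (Γ : Scope I Attr) (μ : I → ASTNode L Attr) : NodeGen L Attr I → ASTNode L Attr
  | .reuse i => μ i
  | .gen ℓ a gs => .mk ℓ (a Γ) (evalGenList Γ μ gs)

def evalGenList (Γ : Scope I Attr) (μ : I → ASTNode L Attr) :
    List (NodeGen L Attr I) → List (ASTNode L Attr)
  | [] => []
  | g :: gs => evalGen Γ μ g :: evalGenList Γ μ gs
end

mutual
/-- The matched node pairs `MP(q, R)`. -/
def MP : Pattern L Attr I → ASTNode L Attr → List (Pattern L Attr I × ASTNode L Attr)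
  | .any, R => [(.any, R)]
  | .node ℓ i qs θ, .mk ℓ' A ns => (.node ℓ i qs θ, .mk ℓ' A ns) :: MPList qs ns

def MPList : List (Pattern L Attr I) → List (ASTNode L Attr) →
    List (Pattern L Attr I × ASTNode L Attr)
  | q :: qs, n :: ns => MP q n ++ MPList qs ns
  | _, _ => []
end

mutual
/-- The generated node pairs `GP(g, Γ, μ)`. -/
def GP (Γ : Scope I Attr) (μ : I → ASTNode L Attr) :
    NodeGen L Attr I → List (NodeGen L Attr I × ASTNode L Attr)
  | .reuse i => [(.reuse i, μ i)]
  | .gen ℓ a gs => (.gen ℓ a gs, evalGen Γ μ (.gen ℓ a gs)) :: GPList Γ μ gs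

def GPList (Γ : Scope I Attr) (μ : I → ASTNode L Attr) :
    List (NodeGen L Attr I) → List (NodeGen L Attr I × ASTNode L Attr)
  | [] => []
  | g :: gs => GP Γ μ g ++ GPList Γ μ gs
end

/-- A generator `g` is safe for `(q, R)` with scopes `Γ, μ`: it reuses exactly
the wildcard-matched subtrees of `R`. -/
def SafeGen (q : Pattern L Attr I) (R : ASTNode L Attr) (g : NodeGen L Attr I)
    (Γ : Scope I Attr) (μ : I → ASTNode L Attr) : Prop :=
  ∀ N : ASTNode L Attr,
    (Pattern.any, N) ∈ MP q R ↔ ∃ i, μ i = N ∧ (NodeGen.reuse i, N) ∈ GP Γ μ g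

mutual
/-- `|g|`: the number of `Gen` and `Reuse` terms in `g`. -/
def NodeGen.size : NodeGen L Attr I → ℕ
  | .reuse _ => 1
  | .gen _ _ gs => 1 + sizeGenList gs

def sizeGenList : List (NodeGen L Attr I) → ℕ
  | [] => 0
  | g :: gs => g.size + sizeGenList gs
end

mutual
/-- `|q|`: the number of `Match` and `AnyNode` terms in `q`. -/
def Pattern.size : Pattern L Attr I → ℕ
  | .any => 1
  | .node _ _ qs _ => 1 + sizePatList qs

def sizePatList : List (Pattern L Attr I) → ℕ
  | [] => 0
  | q :: qs => q.size + sizePatList qs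
end

/-! ### Paths, occurrences, alignment -/

/-- The node reached from `N` by following the child-index path `π`. -/
def nodeAt (N : ASTNode L Attr) (π : List ℕ) : Option (ASTNode L Attr) :=
  match π with
  | [] => some N
  | k :: π' => (N.children[k]?).bind fun c => nodeAt c π'

/-- The subpattern occurrence of `q` located at the child-index path `π`. -/
def subAt (q : Pattern L Attr I) (π : List ℕ) : Option (Pattern L Attr I) :=
  match π, q with
  | [], q => some q
  | _ :: _, .any => none
  | k :: π', .node _ _ qs _ => (qs[k]?).bind fun qk => subAt qk π'

/-- `π` is an occurrence of a `Match` subpattern with node variable `i`. -/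
def IsMatchVarOcc (q : Pattern L Attr I) (π : List ℕ) (i : I) : Prop :=
  ∃ ℓ qs θ, subAt q π = some (.node ℓ i qs θ)

/-- `π` is an occurrence of a `Match` subpattern of `q`. -/
def IsMatchOcc (q : Pattern L Attr I) (π : List ℕ) : Prop :=
  ∃ i, IsMatchVarOcc q π i

/-- The node variables of the `Match` subpatterns of `q`. -/
def patVars (q : Pattern L Attr I) : Set I :=
  {i | ∃ π, IsMatchVarOcc q π i}

/-- The scope `Γ_σ` induced by an assignment `σ` of nodes to (paths of)
`Match`-subpattern occurrences of `q`: it maps the node variable of each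
`Match` subpattern to the attribute map of the assigned node. -/
def scopeOf (q : Pattern L Attr I) (σ : List ℕ → ASTNode L Attr) : Scope I Attr :=
  fun i => if h : ∃ π, IsMatchVarOcc q π i then some (σ h.choose).attrs else none

mutual
/-- Structural alignment at depth 0. -/
def align0 : Pattern L Attr I → NodeGen L Attr I → Bool
  | .any, _ => true
  | _, .reuse _ => true
  | .node ℓ _ qs _, .gen ℓ' _ gs =>
      if ℓ = ℓ' ∧ qs.length = gs.length then align0List qs gs else false

def align0List : List (Pattern L Attr I) → List (NodeGen L Attr I) → Bool
  | [], [] => true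
  | q :: qs, g :: gs => align0 q g && align0List qs gs
  | _, _ => false
end

/-- Structural alignment at depth `d`. -/
def alignD : ℕ → Pattern L Attr I → NodeGen L Attr I → Bool
  | 0, q, g => align0 q g
  | _ + 1, .any, _ => false
  | d + 1, .node _ _ qs _, g => qs.attach.any (fun qk => alignD d qk.1 g)

end

/-!
The descendants of `⟦g⟧_{Γ,μ}` are the nodes built by `Gen` terms together with the
descendants of the reused nodes, and `GP(g, Γ, μ)` lists the former together with the reused
nodes themselves; so `D(⟦g⟧)` and `GP(g)` differ by `D(reused) ⊖ reused`. Symmetrically, a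
successful match of `m` on `R` splits `D(R)` into the `Match`-matched nodes and the descendants
of the wildcard-matched ones, and `D(R)` and `MP(m, R)` differ by `D(wildcard) ⊖ wildcard`.
Safety says that the wildcard-matched and the reused nodes are the same set; since both trees
are duplicate-free they are the same multiset, and the two corrections cancel.
-/

section SafeGeneratorDelta

variable {L Attr I : Type}

theorem listGM_append (l₁ l₂ : List (ASTNode L Attr)) :
    listGM (l₁ ++ l₂) = listGM l₁ + listGM l₂ := by
  simp [listGM]

theorem listGM_perm {l₁ l₂ : List (ASTNode L Attr)} (h : l₁.Perm l₂) :
    listGM l₁ = listGM l₂ :=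
  (h.map _).sum_eq

theorem List.perm_append_append_append_comm {α : Type*} (a b c d : List α) :
    (a ++ b ++ (c ++ d)).Perm (a ++ c ++ (b ++ d)) := by
  simpa using (List.perm_append_comm_assoc b c d).append_left a

mutual
def reusedNodes (μ : I → ASTNode L Attr) : NodeGen L Attr I → List (ASTNode L Attr)
  | .reuse i => [μ i]
  | .gen _ _ gs => reusedNodesList μ gs

def reusedNodesList (μ : I → ASTNode L Attr) : List (NodeGen L Attr I) → List (ASTNode L Attr)
  | [] => []
  | g :: gs => reusedNodes μ g ++ reusedNodesList μ gs
end

mutual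
def wildcardNodes : Pattern L Attr I → ASTNode L Attr → List (ASTNode L Attr)
  | .any, R => [R]
  | .node _ _ qs _, .mk _ _ ns => wildcardNodesList qs ns

def wildcardNodesList : List (Pattern L Attr I) → List (ASTNode L Attr) → List (ASTNode L Attr)
  | q :: qs, n :: ns => wildcardNodes q n ++ wildcardNodesList qs ns
  | _, _ => []
end

theorem evalChildren_isSome_of_evalPattern_node {ℓq : L} {i : I} {qs : List (Pattern L Attr I)}
    {θ : Scope I Attr → Bool} {ℓ : L} {A : Attr} {ns : List (ASTNode L Attr)}
    (h : (evalPattern (.node ℓq i qs θ) (.mk ℓ A ns)).1 = true) :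
    (evalChildren qs ns).isSome := by
  rw [evalPattern] at h
  split at h
  · simp at h
  · simp_all

theorem evalChildren_cons_isSome {q : Pattern L Attr I} {qs : List (Pattern L Attr I)}
    {n : ASTNode L Attr} {ns : List (ASTNode L Attr)}
    (h : (evalChildren (q :: qs) (n :: ns)).isSome) :
    (evalPattern q n).1 = true ∧ (evalChildren qs ns).isSome := by
  rw [evalChildren] at h
  split at h
  · simp_all
  · simp at h

mutual
theorem mem_reusedNodes (Γ : Scope I Attr) (μ : I → ASTNode L Attr) (g : NodeGen L Attr I)
    (N : ASTNode L Attr) :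
    N ∈ reusedNodes μ g ↔ ∃ i, μ i = N ∧ (NodeGen.reuse i, N) ∈ GP Γ μ g := by
  cases g with
  | reuse j => simp [reusedNodes, GP, eq_comm]
  | gen ℓ a gs => simp [reusedNodes, GP, mem_reusedNodesList Γ μ gs N]

theorem mem_reusedNodesList (Γ : Scope I Attr) (μ : I → ASTNode L Attr)
    (gs : List (NodeGen L Attr I)) (N : ASTNode L Attr) :
    N ∈ reusedNodesList μ gs ↔ ∃ i, μ i = N ∧ (NodeGen.reuse i, N) ∈ GPList Γ μ gs := by
  cases gs with
  | nil => simp [reusedNodesList, GPList]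
  | cons g gs =>
      simp [reusedNodesList, GPList, mem_reusedNodes Γ μ g N, mem_reusedNodesList Γ μ gs N,
        and_or_left, exists_or]
end

mutual
theorem mem_wildcardNodes (m : Pattern L Attr I) (R N : ASTNode L Attr) :
    N ∈ wildcardNodes m R ↔ (Pattern.any, N) ∈ MP m R := by
  cases m with
  | any => simp [wildcardNodes, MP]
  | node ℓq i qs θ =>
      cases R with
      | mk ℓ A ns => simp [wildcardNodes, MP, mem_wildcardNodesList qs ns N]

theorem mem_wildcardNodesList (qs : List (Pattern L Attr I)) (ns : List (ASTNode L Attr))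
    (N : ASTNode L Attr) :
    N ∈ wildcardNodesList qs ns ↔ (Pattern.any, N) ∈ MPList qs ns := by
  match qs, ns with
  | [], _ => simp [wildcardNodesList, MPList]
  | _ :: _, [] => simp [wildcardNodesList, MPList]
  | q :: qs, n :: ns =>
      simp [wildcardNodesList, MPList, mem_wildcardNodes q n N, mem_wildcardNodesList qs ns N]
end

mutual
theorem reusedNodes_sublist_descendants (Γ : Scope I Attr) (μ : I → ASTNode L Attr)
    (g : NodeGen L Attr I) :
    (reusedNodes μ g).Sublist (evalGen Γ μ g).descendants := by
  cases g with
  | reuse i =>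
      rw [reusedNodes, evalGen]
      cases μ i with
      | mk ℓ A ns => exact (List.nil_sublist _).cons_cons _
  | gen ℓ a gs =>
      rw [reusedNodes, evalGen, ASTNode.descendants]
      exact (reusedNodesList_sublist_descendantsList Γ μ gs).cons _

theorem reusedNodesList_sublist_descendantsList (Γ : Scope I Attr) (μ : I → ASTNode L Attr)
    (gs : List (NodeGen L Attr I)) :
    (reusedNodesList μ gs).Sublist (descendantsList (evalGenList Γ μ gs)) := by
  cases gs with
  | nil => exact List.nil_sublist _
  | cons g gs =>
      rw [reusedNodesList, evalGenList, descendantsList]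
      exact (reusedNodes_sublist_descendants Γ μ g).append
        (reusedNodesList_sublist_descendantsList Γ μ gs)
end

mutual
theorem wildcardNodes_sublist_descendants (m : Pattern L Attr I) (R : ASTNode L Attr) :
    (wildcardNodes m R).Sublist R.descendants := by
  cases m with
  | any =>
      cases R with
      | mk ℓ A ns => exact (List.nil_sublist _).cons_cons _
  | node ℓq i qs θ =>
      cases R with
      | mk ℓ A ns =>
        rw [wildcardNodes, ASTNode.descendants]
        exact (wildcardNodesList_sublist_descendantsList qs ns).cons _

theorem wildcardNodesList_sublist_descendantsList (qs : List (Pattern L Attr I))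
    (ns : List (ASTNode L Attr)) :
    (wildcardNodesList qs ns).Sublist (descendantsList ns) := by
  match qs, ns with
  | [], _ => exact List.nil_sublist _
  | _ :: _, [] => exact List.nil_sublist _
  | q :: qs, n :: ns =>
      rw [wildcardNodesList, descendantsList]
      exact (wildcardNodes_sublist_descendants q n).append
        (wildcardNodesList_sublist_descendantsList qs ns)
end

theorem SafeGen.wildcardNodes_perm_reusedNodes {m : Pattern L Attr I} {R : ASTNode L Attr}
    {g : NodeGen L Attr I} {Γ : Scope I Attr} {μ : I → ASTNode L Attr}
    (hsafe : SafeGen m R g Γ μ) (hR : R.descendants.Nodup)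
    (hg : (evalGen Γ μ g).descendants.Nodup) :
    (wildcardNodes m R).Perm (reusedNodes μ g) := by
  rw [List.perm_ext_iff_of_nodup ((wildcardNodes_sublist_descendants m R).nodup hR)
    ((reusedNodes_sublist_descendants Γ μ g).nodup hg)]
  intro N
  rw [mem_wildcardNodes, mem_reusedNodes Γ]
  exact hsafe N

mutual
theorem descendants_evalGen_append_perm (Γ : Scope I Attr) (μ : I → ASTNode L Attr)
    (g : NodeGen L Attr I) :
    ((evalGen Γ μ g).descendants ++ reusedNodes μ g).Perm
      ((GP Γ μ g).map Prod.snd ++ (reusedNodes μ g).flatMap ASTNode.descendants) := by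
  cases g with
  | reuse i => simp [evalGen, reusedNodes, GP]
  | gen ℓ a gs =>
      simpa [evalGen, reusedNodes, GP, ASTNode.descendants] using
        descendantsList_evalGenList_append_perm Γ μ gs

theorem descendantsList_evalGenList_append_perm (Γ : Scope I Attr) (μ : I → ASTNode L Attr)
    (gs : List (NodeGen L Attr I)) :
    (descendantsList (evalGenList Γ μ gs) ++ reusedNodesList μ gs).Perm
      ((GPList Γ μ gs).map Prod.snd ++ (reusedNodesList μ gs).flatMap ASTNode.descendants) := by
  cases gs with
  | nil => simp [evalGenList, descendantsList, reusedNodesList, GPList]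
  | cons g gs =>
      simp only [evalGenList, descendantsList, reusedNodesList, GPList, List.map_append,
        List.flatMap_append]
      exact (List.perm_append_append_append_comm ..).trans
        (((descendants_evalGen_append_perm Γ μ g).append
          (descendantsList_evalGenList_append_perm Γ μ gs)).trans
            (List.perm_append_append_append_comm ..))
end

mutual
theorem descendants_append_perm_of_evalPattern (m : Pattern L Attr I) (R : ASTNode L Attr)
    (hm : (evalPattern m R).1 = true) :
    (R.descendants ++ wildcardNodes m R).Perm
      ((MP m R).map Prod.snd ++ (wildcardNodes m R).flatMap ASTNode.descendants) := by
  cases m with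
  | any => simp [wildcardNodes, MP]
  | node ℓq i qs θ =>
      cases R with
      | mk ℓ A ns =>
        simpa [wildcardNodes, MP, ASTNode.descendants] using
          descendantsList_append_perm_of_evalChildren qs ns
            (evalChildren_isSome_of_evalPattern_node hm)

theorem descendantsList_append_perm_of_evalChildren (qs : List (Pattern L Attr I))
    (ns : List (ASTNode L Attr)) (hc : (evalChildren qs ns).isSome) :
    (descendantsList ns ++ wildcardNodesList qs ns).Perm
      ((MPList qs ns).map Prod.snd ++ (wildcardNodesList qs ns).flatMap ASTNode.descendants) := by
  match qs, ns with
  | [], [] => simp [descendantsList, wildcardNodesList, MPList]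
  | [], _ :: _ => simp [evalChildren] at hc
  | _ :: _, [] => simp [evalChildren] at hc
  | q :: qs, n :: ns =>
      obtain ⟨hq, hqs⟩ := evalChildren_cons_isSome hc
      simp only [descendantsList, wildcardNodesList, MPList, List.map_append, List.flatMap_append]
      exact (List.perm_append_append_append_comm ..).trans
        (((descendants_append_perm_of_evalPattern q n hq).append
          (descendantsList_append_perm_of_evalChildren qs ns hqs)).trans
            (List.perm_append_append_append_comm ..))
end

end SafeGeneratorDelta

/-- **Update delta for safe generators.** If `⟦m(R)⟧ = (⊤, Γ₀)`,
`g` is safe for `(m, R)` with scopes `Γ, μ`, every node occurs at most once in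
`R` and at most once in `⟦g⟧_{Γ,μ}`, then
`D(⟦g⟧_{Γ,μ}) ⊖ D(R) = {| N' ↦ 1 : (g', N') ∈ GP(g,Γ,μ) |} ⊖ {| N' ↦ 1 : (q', N') ∈ MP(m,R) |}`. -/
theorem safe_generator_delta {L Attr I : Type}
    (m : Pattern L Attr I) (R : ASTNode L Attr)
    (g : NodeGen L Attr I) (Γ : Scope I Attr) (μ : I → ASTNode L Attr)
    (Γ₀ : Scope I Attr) (hm : evalPattern m R = (true, Γ₀))
    (hsafe : SafeGen m R g Γ μ)
    (hR : R.descendants.Nodup)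
    (hg : (evalGen Γ μ g).descendants.Nodup) :
    listGM (evalGen Γ μ g).descendants - listGM R.descendants =
      listGM ((GP Γ μ g).map Prod.snd) - listGM ((MP m R).map Prod.snd) := by
  have hperm := hsafe.wildcardNodes_perm_reusedNodes hR hg
  have hgen := listGM_perm (descendants_evalGen_append_perm Γ μ g)
  have hpat := listGM_perm (descendants_append_perm_of_evalPattern m R (by rw [hm]))
  rw [listGM_append, listGM_append, ← listGM_perm hperm,
    ← listGM_perm (hperm.flatMap_right _)] at hgen
  rw [listGM_append, listGM_append] at hpat
  calc _ = (listGM (evalGen Γ μ g).descendants + listGM (wildcardNodes m R))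
        - (listGM R.descendants + listGM (wildcardNodes m R)) :=
          (add_sub_add_right_eq_sub ..).symm
    _ = _ := by rw [hgen, hpat, add_sub_add_right_eq_sub]
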